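/- arXiv:2409.09624 — 2 statements merged into one kernel-verified Lean document; each statement's English description precedes it below -/
import Mathlib

section
/- Let Λ₀ > 1, Λ₁, …, Λ_{p-1} ≥ 0, and let F(z) = Σ_{k=0}^{p-1} conj(z)^k · A_k(z) where each A_k is analytic on U, A_k(0) = 0, A₀'(0) = 1, |A₀'(z)| < Λ₀ and |A_k'(z)| ≤ Λ_k (k = 1, …, p-1) on U. If ρ₁ ∈ (0,1) satisfies Λ₀(1-Λ₀ρ₁)/(Λ₀-ρ₁) - Σ_{k=1}^{p-1}(k+1)Λ_k ρ₁^k = 0, then F is injective on the disk U_{ρ₁} = {|z| < ρ₁}. -/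
/-!
Write `L = Λ₀` and `F = A₀ + G` with `G z = ∑_{k ≥ 1} z̄ᵏ A_k z`. By the Schwarz lemma applied to
`L (A₀' - 1) / (L² - A₀')`, the values of `A₀'` on `|z| ≤ ρ` lie in a disk with center `c(ρ)` and
radius `r(ρ)`, where `c - r = L (1 - Lρ) / (L - ρ)`; hence `|A₀ z₁ - A₀ z₂| ≥ (c - r) |z₁ - z₂|`.
The Lipschitz bounds on the `A_k` give `|G z₁ - G z₂| ≤ ∑ (k + 1) Λ_k ρᵏ |z₁ - z₂|`. Both constants
agree at `ρ₁`, and for `ρ < ρ₁` the first is strictly larger, since `L (1 - Lρ) / (L - ρ)` decreases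
and the sum increases with `ρ`.
-/
open Metric Finset

/-- `{w | L ‖w - 1‖ ≤ ρ ‖L² - w‖}` is the closed disk with this center and radius
`apolloniusRadius L ρ` (an Apollonius disk for the points `1` and `L²`). -/
noncomputable def apolloniusCenter (L ρ : ℝ) : ℝ := L ^ 2 * (1 - ρ ^ 2) / (L ^ 2 - ρ ^ 2)

noncomputable def apolloniusRadius (L ρ : ℝ) : ℝ := L * ρ * (L ^ 2 - 1) / (L ^ 2 - ρ ^ 2)

lemma sq_norm_sub_ofReal (w : ℂ) (a : ℝ) : ‖w - a‖ ^ 2 = (w.re - a) ^ 2 + w.im ^ 2 := by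
  rw [Complex.sq_norm, Complex.normSq_apply]; simp; ring

lemma apollonius_identity {L ρ : ℝ} (hD : L ^ 2 - ρ ^ 2 ≠ 0) (w : ℂ) :
    ‖(L : ℂ) * (w - 1)‖ ^ 2 - ρ ^ 2 * ‖(L : ℂ) ^ 2 - w‖ ^ 2
      = (L ^ 2 - ρ ^ 2) * (‖w - apolloniusCenter L ρ‖ ^ 2 - apolloniusRadius L ρ ^ 2) := by
  rw [norm_mul, mul_pow, Complex.norm_real, Real.norm_eq_abs, sq_abs, ← Complex.ofReal_one,
    sq_norm_sub_ofReal, norm_sub_rev, ← Complex.ofReal_pow, sq_norm_sub_ofReal,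
    sq_norm_sub_ofReal, apolloniusCenter, apolloniusRadius]
  field_simp
  ring

lemma apolloniusCenter_one (L : ℝ) : apolloniusCenter L 1 = 0 := by simp [apolloniusCenter]

lemma apolloniusRadius_one {L : ℝ} (h : L ^ 2 - 1 ≠ 0) : apolloniusRadius L 1 = L := by
  rw [apolloniusRadius, one_pow]; field_simp

lemma apolloniusRadius_nonneg {L ρ : ℝ} (hL : 1 < L) (hρ0 : 0 ≤ ρ) (hρL : ρ < L) :
    0 ≤ apolloniusRadius L ρ := by
  unfold apolloniusRadius
  have : 0 < L ^ 2 - ρ ^ 2 := by nlinarith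
  have : 0 < L ^ 2 - 1 := by nlinarith
  positivity

lemma apolloniusCenter_pos {L ρ : ℝ} (hL : 1 < L) (hρ0 : 0 ≤ ρ) (hρ1 : ρ < 1) :
    0 < apolloniusCenter L ρ := by
  unfold apolloniusCenter
  have : 0 < L ^ 2 - ρ ^ 2 := by nlinarith
  have : 0 < 1 - ρ ^ 2 := by nlinarith
  have : 0 < L := by linarith
  positivity

lemma apolloniusCenter_sub_apolloniusRadius {L ρ : ℝ} (hL : 0 < L) (hρ0 : 0 ≤ ρ) (hρL : ρ < L) :
    apolloniusCenter L ρ - apolloniusRadius L ρ = L * (1 - L * ρ) / (L - ρ) := by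
  have : L - ρ ≠ 0 := by linarith
  have : L + ρ ≠ 0 := by linarith
  have : L ^ 2 - ρ ^ 2 ≠ 0 := by rw [sq_sub_sq]; positivity
  rw [apolloniusCenter, apolloniusRadius]
  field_simp
  ring

lemma norm_mul_sub_one_lt_norm_sq_sub {L : ℝ} (hL : 1 < L) {w : ℂ} (hw : ‖w‖ < L) :
    ‖(L : ℂ) * (w - 1)‖ < ‖(L : ℂ) ^ 2 - w‖ := by
  have hL2 : L ^ 2 - 1 ^ 2 ≠ 0 := by nlinarith
  have key := apollonius_identity hL2 w
  rw [apolloniusCenter_one, apolloniusRadius_one (by simpa using hL2), Complex.ofReal_zero,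
    sub_zero] at key
  have hw2 : 0 < L ^ 2 - ‖w‖ ^ 2 := by nlinarith [norm_nonneg w]
  rw [← sq_lt_sq₀ (norm_nonneg _) (norm_nonneg _)]
  nlinarith [mul_pos (show (0 : ℝ) < L ^ 2 - 1 by nlinarith) hw2]

lemma norm_sub_apolloniusCenter_le {L ρ : ℝ} (hL : 1 < L) (hρ0 : 0 ≤ ρ) (hρL : ρ < L) {w : ℂ}
    (h : ‖(L : ℂ) * (w - 1)‖ ≤ ρ * ‖(L : ℂ) ^ 2 - w‖) :
    ‖w - apolloniusCenter L ρ‖ ≤ apolloniusRadius L ρ := by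
  have hD : 0 < L ^ 2 - ρ ^ 2 := by nlinarith
  have key := apollonius_identity hD.ne' w
  have hsq := pow_le_pow_left₀ (norm_nonneg _) h 2
  rw [mul_pow] at hsq
  rw [← sq_le_sq₀ (norm_nonneg _) (apolloniusRadius_nonneg hL hρ0 hρL)]
  nlinarith

theorem norm_sub_apolloniusCenter_le_of_norm_lt {L ρ : ℝ} (hL : 1 < L) (hρ1 : ρ < 1) {h : ℂ → ℂ}
    (hd : DifferentiableOn ℂ h (ball 0 1)) (h0 : h 0 = 1) (hb : ∀ w ∈ ball (0 : ℂ) 1, ‖h w‖ < L)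
    {z : ℂ} (hz : ‖z‖ ≤ ρ) :
    ‖h z - apolloniusCenter L ρ‖ ≤ apolloniusRadius L ρ := by
  have hden : ∀ w ∈ ball (0 : ℂ) 1, (L : ℂ) ^ 2 - h w ≠ 0 := fun w hw =>
    norm_pos_iff.mp <| (norm_nonneg _).trans_lt (norm_mul_sub_one_lt_norm_sq_sub hL (hb w hw))
  set g : ℂ → ℂ := fun w => L * (h w - 1) / (L ^ 2 - h w)
  have hgd : DifferentiableOn ℂ g (ball 0 1) :=
    ((differentiableOn_const _).mul (hd.sub_const 1)).div ((differentiableOn_const _).sub hd) hden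
  have hg : Set.MapsTo g (ball 0 1) (closedBall 0 1) := fun w hw => by
    rw [mem_closedBall_zero_iff, norm_div, div_le_one (norm_pos_iff.mpr (hden w hw))]
    exact (norm_mul_sub_one_lt_norm_sq_sub hL (hb w hw)).le
  have hz1 : ‖z‖ < 1 := hz.trans_lt hρ1
  have hgz : ‖g z‖ ≤ ρ :=
    (Complex.norm_le_norm_of_mapsTo_ball hgd hg (by simp [g, h0]) hz1).trans hz
  rw [norm_div, div_le_iff₀ (norm_pos_iff.mpr (hden z (mem_ball_zero_iff.mpr hz1)))] at hgz
  exact norm_sub_apolloniusCenter_le hL ((norm_nonneg z).trans hz) (by linarith) hgz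

theorem Convex.sub_mul_norm_sub_le_norm_image_sub {𝕜 E : Type*} [RCLike 𝕜]
    [NormedAddCommGroup E] [NormedSpace 𝕜 E] {f : 𝕜 → E} {s : Set 𝕜} (hs : Convex ℝ s)
    (hf : ∀ x ∈ s, DifferentiableAt 𝕜 f x) {c : E} {r : ℝ} (bound : ∀ x ∈ s, ‖deriv f x - c‖ ≤ r)
    {x y : 𝕜} (hx : x ∈ s) (hy : y ∈ s) :
    (‖c‖ - r) * ‖x - y‖ ≤ ‖f x - f y‖ := by
  have hg : ∀ x ∈ s, HasDerivWithinAt (fun x => f x - x • c) (deriv f x - c) s x := by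
    intro x hx
    have := (hf x hx).hasDerivAt.sub ((hasDerivAt_id x).smul_const c)
    rw [one_smul] at this
    exact this.hasDerivWithinAt
  have hmvt := hs.norm_image_sub_le_of_norm_hasDerivWithin_le hg bound hy hx
  calc (‖c‖ - r) * ‖x - y‖ = ‖(x - y) • c‖ - r * ‖x - y‖ := by rw [norm_smul]; ring
    _ ≤ ‖f x - f y‖ := by
      have := norm_sub_norm_le ((x - y) • c) (f x - f y)
      rw [show (x - y) • c - (f x - f y) = -((f x - x • c) - (f y - y • c)) by
        rw [sub_smul]; abel, norm_neg] at this
      linarith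

theorem mul_norm_sub_le_norm_sub_of_norm_deriv_lt {L ρ : ℝ} (hL : 1 < L) (hρ1 : ρ < 1)
    {f : ℂ → ℂ} (hf : DifferentiableOn ℂ f (ball 0 1)) (hf'0 : deriv f 0 = 1)
    (hf' : ∀ z ∈ ball (0 : ℂ) 1, ‖deriv f z‖ < L) {z₁ z₂ : ℂ} (hz₁ : ‖z₁‖ ≤ ρ) (hz₂ : ‖z₂‖ ≤ ρ) :
    L * (1 - L * ρ) / (L - ρ) * ‖z₁ - z₂‖ ≤ ‖f z₁ - f z₂‖ := by
  have hρ0 : 0 ≤ ρ := (norm_nonneg z₁).trans hz₁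
  have hs : closedBall (0 : ℂ) ρ ⊆ ball 0 1 := closedBall_subset_ball hρ1
  have hdiff : ∀ x ∈ closedBall (0 : ℂ) ρ, DifferentiableAt ℂ f x := fun x hx =>
    hf.differentiableAt (isOpen_ball.mem_nhds (hs hx))
  have bound : ∀ x ∈ closedBall (0 : ℂ) ρ,
      ‖deriv f x - apolloniusCenter L ρ‖ ≤ apolloniusRadius L ρ := fun x hx =>
    norm_sub_apolloniusCenter_le_of_norm_lt hL hρ1 (hf.deriv isOpen_ball) hf'0 hf'
      (mem_closedBall_zero_iff.mp hx)
  have key := (convex_closedBall 0 ρ).sub_mul_norm_sub_le_norm_image_sub hdiff bound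
    (mem_closedBall_zero_iff.mpr hz₁) (mem_closedBall_zero_iff.mpr hz₂)
  rwa [Complex.norm_real, Real.norm_of_nonneg (apolloniusCenter_pos hL hρ0 hρ1).le,
    apolloniusCenter_sub_apolloniusRadius (by linarith) hρ0 (by linarith)] at key

theorem norm_pow_sub_pow_le {𝕜 : Type*} [RCLike 𝕜] {x y : 𝕜} {ρ : ℝ} (hx : ‖x‖ ≤ ρ)
    (hy : ‖y‖ ≤ ρ) (k : ℕ) : ‖x ^ k - y ^ k‖ ≤ k * ρ ^ (k - 1) * ‖x - y‖ := by
  refine (convex_closedBall (0 : 𝕜) ρ).norm_image_sub_le_of_norm_hasDerivWithin_le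
    (fun w _ => (hasDerivAt_pow k w).hasDerivWithinAt) (fun w hw => ?_)
    (mem_closedBall_zero_iff.mpr hy) (mem_closedBall_zero_iff.mpr hx)
  rw [norm_mul, norm_pow, RCLike.norm_natCast]
  gcongr
  exact mem_closedBall_zero_iff.mp hw

open ComplexConjugate in
theorem norm_conj_pow_mul_sub_le {f : ℂ → ℂ} {M ρ : ℝ} (hf : DifferentiableOn ℂ f (ball 0 1))
    (hf0 : f 0 = 0) (hf' : ∀ z ∈ ball (0 : ℂ) 1, ‖deriv f z‖ ≤ M) (hρ1 : ρ < 1) {z₁ z₂ : ℂ}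
    (hz₁ : ‖z₁‖ ≤ ρ) (hz₂ : ‖z₂‖ ≤ ρ) (k : ℕ) :
    ‖conj z₁ ^ k * f z₁ - conj z₂ ^ k * f z₂‖ ≤ (k + 1) * M * ρ ^ k * ‖z₁ - z₂‖ := by
  have hM : 0 ≤ M := (norm_nonneg _).trans (hf' 0 (mem_ball_self one_pos))
  have hρ0 : 0 ≤ ρ := (norm_nonneg z₁).trans hz₁
  have hmem : ∀ {z : ℂ}, ‖z‖ ≤ ρ → z ∈ ball (0 : ℂ) 1 := fun hz =>
    mem_ball_zero_iff.mpr (hz.trans_lt hρ1)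
  have lip : ∀ {x y : ℂ}, ‖x‖ ≤ ρ → ‖y‖ ≤ ρ → ‖f x - f y‖ ≤ M * ‖x - y‖ := fun hx hy =>
    (convex_ball 0 1).norm_image_sub_le_of_norm_deriv_le
      (fun w hw => hf.differentiableAt (isOpen_ball.mem_nhds hw)) hf' (hmem hy) (hmem hx)
  have hfz₁ : ‖f z₁‖ ≤ M * ρ := by
    simpa [hf0] using (lip hz₁ (y := 0) (by simpa using hρ0)).trans (by rw [sub_zero]; gcongr)
  have hpow : ‖conj z₁ ^ k - conj z₂ ^ k‖ ≤ k * ρ ^ (k - 1) * ‖z₁ - z₂‖ := by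
    rw [← map_pow, ← map_pow, ← map_sub, Complex.norm_conj]
    exact norm_pow_sub_pow_le hz₁ hz₂ k
  have hz₂k : ‖conj z₂ ^ k‖ ≤ ρ ^ k := by
    rw [norm_pow, Complex.norm_conj]
    gcongr
  calc ‖conj z₁ ^ k * f z₁ - conj z₂ ^ k * f z₂‖
      = ‖(conj z₁ ^ k - conj z₂ ^ k) * f z₁ + conj z₂ ^ k * (f z₁ - f z₂)‖ := by ring_nf
    _ ≤ k * ρ ^ (k - 1) * ‖z₁ - z₂‖ * (M * ρ) + ρ ^ k * (M * ‖z₁ - z₂‖) := by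
      grw [norm_add_le, norm_mul, norm_mul, hpow, hfz₁, hz₂k, lip hz₁ hz₂]
    _ = (k + 1) * M * ρ ^ k * ‖z₁ - z₂‖ := by
      rcases k with _ | k
      · simp
      · rw [Nat.add_sub_cancel, pow_succ]; push_cast; ring

theorem strictAntiOn_mul_one_sub_mul_div_sub {L : ℝ} (hL : 1 < L) :
    StrictAntiOn (fun r => L * (1 - L * r) / (L - r)) (Set.Iio L) := by
  intro r₁ hr₁ r₂ hr₂ hr
  have h₁ : 0 < L - r₁ := sub_pos.mpr hr₁
  have h₂ : 0 < L - r₂ := sub_pos.mpr hr₂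
  simp only
  rw [div_lt_div_iff₀ h₂ h₁]
  have hL2 : 0 < L ^ 2 - 1 := by nlinarith
  nlinarith [mul_pos (mul_pos (by linarith : (0 : ℝ) < L) (sub_pos.mpr hr)) hL2]

theorem sum_range_eq_add_sum_Icc {M : Type*} [AddCommMonoid M] (f : ℕ → M) {p : ℕ}
    (hp : 0 < p) :
    ∑ k ∈ range p, f k = f 0 + ∑ k ∈ Icc 1 (p - 1), f k := by
  rw [sum_range_eq_add_Ico f hp, Icc_sub_one_right_eq_Ico_of_not_isMin (by simpa using hp.ne')]

theorem stmt6 (p : ℕ) (hp : 0 < p) (Λ : ℕ → ℝ) (hΛ0 : 1 < Λ 0)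
    (hΛ : ∀ k ∈ Finset.Icc 1 (p - 1), 0 ≤ Λ k)
    (A : ℕ → ℂ → ℂ)
    (hA : ∀ k ∈ Finset.range p, DifferentiableOn ℂ (A k) (Metric.ball 0 1))
    (hA0 : ∀ k ∈ Finset.range p, A k 0 = 0)
    (hA0'0 : deriv (A 0) 0 = 1)
    (hA0' : ∀ z ∈ Metric.ball (0 : ℂ) 1, ‖deriv (A 0) z‖ < Λ 0)
    (hAk' : ∀ k ∈ Finset.Icc 1 (p - 1), ∀ z ∈ Metric.ball (0 : ℂ) 1,
      ‖deriv (A k) z‖ ≤ Λ k)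
    (F : ℂ → ℂ)
    (hF : ∀ z, F z = ∑ k ∈ Finset.range p, (starRingEnd ℂ z) ^ k * A k z)
    (ρ₁ : ℝ) (hρ₁ : ρ₁ ∈ Set.Ioo (0 : ℝ) 1)
    (hroot : Λ 0 * (1 - Λ 0 * ρ₁) / (Λ 0 - ρ₁)
      - ∑ k ∈ Finset.Icc 1 (p - 1), ((k : ℝ) + 1) * Λ k * ρ₁ ^ k = 0) :
    Set.InjOn F (Metric.ball 0 ρ₁) := by
  intro z₁ hz₁ z₂ hz₂ hF₁₂
  by_contra hne
  set ρ := max ‖z₁‖ ‖z₂‖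
  have hρρ₁ : ρ < ρ₁ := max_lt (mem_ball_zero_iff.mp hz₁) (mem_ball_zero_iff.mp hz₂)
  have hρ1 : ρ < 1 := hρρ₁.trans hρ₁.2
  have hIcc : ∀ k ∈ Icc 1 (p - 1), k ∈ range p := fun k hk => by
    simp only [mem_Icc, mem_range] at hk ⊢; omega
  have hA0diff : A 0 z₁ - A 0 z₂ = ∑ k ∈ Icc 1 (p - 1),
      (starRingEnd ℂ z₂ ^ k * A k z₂ - starRingEnd ℂ z₁ ^ k * A k z₁) := by
    rw [hF, hF, sum_range_eq_add_sum_Icc _ hp, sum_range_eq_add_sum_Icc _ hp] at hF₁₂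
    rw [sum_sub_distrib]
    linear_combination (by simpa using hF₁₂ : A 0 z₁ + _ = A 0 z₂ + _)
  have hlower := mul_norm_sub_le_norm_sub_of_norm_deriv_lt hΛ0 hρ1 (hA 0 (mem_range.mpr hp))
    hA0'0 hA0' (le_max_left _ _) (le_max_right _ _)
  have hupper : ‖A 0 z₁ - A 0 z₂‖
      ≤ (∑ k ∈ Icc 1 (p - 1), ((k : ℝ) + 1) * Λ k * ρ₁ ^ k) * ‖z₁ - z₂‖ := by
    rw [hA0diff, sum_mul]
    refine (norm_sum_le _ _).trans (sum_le_sum fun k hk => ?_)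
    rw [norm_sub_rev]
    calc _ ≤ ((k : ℝ) + 1) * Λ k * ρ ^ k * ‖z₁ - z₂‖ :=
          norm_conj_pow_mul_sub_le (hA k (hIcc k hk)) (hA0 k (hIcc k hk)) (hAk' k hk) hρ1
            (le_max_left _ _) (le_max_right _ _) k
      _ ≤ _ := by have := hΛ k hk; gcongr
  have hanti := strictAntiOn_mul_one_sub_mul_div_sub hΛ0 (by linarith : ρ < Λ 0)
    (by linarith [hρ₁.2] : ρ₁ < Λ 0) hρρ₁
  have hd : 0 < ‖z₁ - z₂‖ := norm_pos_iff.mpr (sub_ne_zero.mpr hne)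
  have hroot' : ∑ k ∈ Icc 1 (p - 1), ((k : ℝ) + 1) * Λ k * ρ₁ ^ k
      = Λ 0 * (1 - Λ 0 * ρ₁) / (Λ 0 - ρ₁) := by linarith
  rw [hroot'] at hupper
  exact (mul_lt_mul_of_pos_right hanti hd).not_ge (hlower.trans hupper)
end

section
/- Let Λ₀ > 1 and define g(x) = Λ₀²x - Σ_{k=1}^{p-1} Λ_k x^{k+1} + (Λ₀³-Λ₀)ln(1 - x/Λ₀) on [0,1], with Λ₁,…,Λ_{p-1} ≥ 0. Let ρ₁ ∈ (0,1) satisfy Λ₀(1-Λ₀ρ₁)/(Λ₀-ρ₁) = Σ_{k=1}^{p-1}(k+1)Λ_k ρ₁^k. Then g'(x) = 0 on [0,1] iff x = ρ₁, g is strictly increasing on [0,ρ₁] and strictly decreasing on [ρ₁,1], and g(ρ₁) > 0. -/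
/-!
With `c = Λ₀`, the derivative of `g` is `g' x = c (1 - c x) / (c - x) - ∑ (k + 1) Λₖ xᵏ`.
Since `c (1 - c x) / (c - x) = c² - c (c² - 1) / (c - x)` and `c > 1`, the first term is
strictly decreasing on `[0, 1]`, while the polynomial has nonnegative coefficients and so is
increasing there. Hence `g'` is strictly decreasing, and `ρ₁` is exactly its zero, so `g` rises
on `[0, ρ₁]` and falls on `[ρ₁, 1]`; finally `g ρ₁ > g 0 = 0`.
-/

open Set

section StrictAntiDeriv

variable {f f' : ℝ → ℝ} {a b ρ : ℝ}
  (hf : ∀ x ∈ Icc a b, HasDerivAt f (f' x) x) (hf' : StrictAntiOn f' (Icc a b))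
  (hρ : ρ ∈ Icc a b) (hzero : f' ρ = 0)
include hf hf' hρ hzero

theorem strictMonoOn_Icc_left_of_strictAntiOn_deriv : StrictMonoOn f (Icc a ρ) := by
  have hsub : Icc a ρ ⊆ Icc a b := Icc_subset_Icc_right hρ.2
  refine strictMonoOn_of_deriv_pos (convex_Icc a ρ)
    (fun x hx => (hf x (hsub hx)).continuousAt.continuousWithinAt) fun x hx => ?_
  rw [interior_Icc] at hx
  rw [(hf x (hsub (Ioo_subset_Icc_self hx))).deriv, ← hzero]
  exact hf' (hsub (Ioo_subset_Icc_self hx)) hρ hx.2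

theorem strictAntiOn_Icc_right_of_strictAntiOn_deriv : StrictAntiOn f (Icc ρ b) := by
  have hsub : Icc ρ b ⊆ Icc a b := Icc_subset_Icc_left hρ.1
  refine strictAntiOn_of_deriv_neg (convex_Icc ρ b)
    (fun x hx => (hf x (hsub hx)).continuousAt.continuousWithinAt) fun x hx => ?_
  rw [interior_Icc] at hx
  rw [(hf x (hsub (Ioo_subset_Icc_self hx))).deriv, ← hzero]
  exact hf' hρ (hsub (Ioo_subset_Icc_self hx)) hx.1

theorem deriv_eq_zero_iff_of_strictAntiOn_deriv {x : ℝ} (hx : x ∈ Icc a b) :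
    deriv f x = 0 ↔ x = ρ := by
  rw [(hf x hx).deriv, ← hzero]
  exact hf'.injOn.eq_iff hx hρ

end StrictAntiDeriv

theorem hasDerivAt_sub_sum_add_log_one_sub_div (s : Finset ℕ) (a : ℕ → ℝ) {c x : ℝ}
    (hc : c ≠ 0) (hx : x ≠ c) :
    HasDerivAt
      (fun y => c ^ 2 * y - ∑ k ∈ s, a k * y ^ (k + 1) + (c ^ 3 - c) * Real.log (1 - y / c))
      (c * (1 - c * x) / (c - x) - ∑ k ∈ s, ((k : ℝ) + 1) * a k * x ^ k) x := by
  have hcx : c - x ≠ 0 := sub_ne_zero.mpr hx.symm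
  have hlog : HasDerivAt (fun y => Real.log (1 - y / c)) (-(1 / c) / (1 - x / c)) x := by
    refine HasDerivAt.log ?_ (by rwa [one_sub_div hc, div_ne_zero_iff, and_iff_left hc])
    simpa using ((hasDerivAt_id x).div_const c).const_sub 1
  have hsum : HasDerivAt (fun y => ∑ k ∈ s, a k * y ^ (k + 1))
      (∑ k ∈ s, ((k : ℝ) + 1) * a k * x ^ k) x := by
    refine (HasDerivAt.fun_sum fun k _ => (hasDerivAt_pow (k + 1) x).const_mul (a k)).congr_deriv
      (Finset.sum_congr rfl fun k _ => ?_)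
    push_cast
    ring
  refine ((((hasDerivAt_id' x).const_mul (c ^ 2)).fun_sub hsum).fun_add
    (hlog.const_mul (c ^ 3 - c))).congr_deriv ?_
  rw [one_sub_div hc]
  field_simp
  ring

theorem strictAntiOn_mul_one_sub_mul_div_sub_s11 {c : ℝ} (hc : 1 < c) :
    StrictAntiOn (fun x => c * (1 - c * x) / (c - x)) (Iio c) := by
  intro x hx y hy hxy
  rw [div_lt_div_iff₀ (sub_pos.mpr hy) (sub_pos.mpr hx)]
  -- the difference of the two sides is `c (c² - 1) (y - x)`
  nlinarith [mul_pos (mul_pos (by linarith : (0 : ℝ) < c) (by nlinarith : (0 : ℝ) < c ^ 2 - 1))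
    (sub_pos.mpr hxy)]

theorem monotoneOn_sum_mul_pow_of_nonneg (s : Finset ℕ) {a : ℕ → ℝ}
    (ha : ∀ k ∈ s, 0 ≤ a k) :
    MonotoneOn (fun x => ∑ k ∈ s, a k * x ^ k) (Ici 0) := fun _ hx _ _ hxy =>
  Finset.sum_le_sum fun k hk => mul_le_mul_of_nonneg_left (pow_le_pow_left₀ hx hxy k) (ha k hk)

theorem stmt11_general (p : ℕ) (Λ : ℕ → ℝ) (hΛ0 : 1 < Λ 0)
    (hΛ : ∀ k ∈ Finset.Icc 1 (p - 1), 0 ≤ Λ k)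
    (ρ₁ : ℝ) (hρ₁ : ρ₁ ∈ Set.Ioo (0 : ℝ) 1)
    (hroot : Λ 0 * (1 - Λ 0 * ρ₁) / (Λ 0 - ρ₁)
      = ∑ k ∈ Finset.Icc 1 (p - 1), ((k : ℝ) + 1) * Λ k * ρ₁ ^ k)
    (g : ℝ → ℝ)
    (hg : ∀ x, g x = (Λ 0) ^ 2 * x
      - (∑ k ∈ Finset.Icc 1 (p - 1), Λ k * x ^ (k + 1))
      + ((Λ 0) ^ 3 - Λ 0) * Real.log (1 - x / Λ 0)) :
    (∀ x ∈ Set.Icc (0 : ℝ) 1, deriv g x = 0 ↔ x = ρ₁) ∧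
    StrictMonoOn g (Set.Icc 0 ρ₁) ∧
    StrictAntiOn g (Set.Icc ρ₁ 1) ∧
    0 < g ρ₁ := by
  set g' : ℝ → ℝ := fun x =>
    Λ 0 * (1 - Λ 0 * x) / (Λ 0 - x) - ∑ k ∈ Finset.Icc 1 (p - 1), ((k : ℝ) + 1) * Λ k * x ^ k
  have hderiv : ∀ x ∈ Icc (0 : ℝ) 1, HasDerivAt g (g' x) x := fun x hx => by
    rw [funext hg]
    exact hasDerivAt_sub_sum_add_log_one_sub_div _ _ (by linarith) (by linarith [hx.2])
  have hanti : StrictAntiOn g' (Icc 0 1) := fun x hx y hy hxy => by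
    have hfrac := strictAntiOn_mul_one_sub_mul_div_sub_s11 hΛ0 (show x < Λ 0 by linarith [hx.2])
      (show y < Λ 0 by linarith [hy.2]) hxy
    have hpoly := monotoneOn_sum_mul_pow_of_nonneg (a := fun k => ((k : ℝ) + 1) * Λ k) _
      (fun k hk => mul_nonneg (by positivity) (hΛ k hk)) hx.1 hy.1 hxy.le
    simp only [g']
    linarith
  have hρ : ρ₁ ∈ Icc (0 : ℝ) 1 := Ioo_subset_Icc_self hρ₁
  have hzero : g' ρ₁ = 0 := sub_eq_zero.mpr hroot
  have hmono := strictMonoOn_Icc_left_of_strictAntiOn_deriv hderiv hanti hρ hzero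
  refine ⟨fun x hx => deriv_eq_zero_iff_of_strictAntiOn_deriv hderiv hanti hρ hzero hx, hmono,
    strictAntiOn_Icc_right_of_strictAntiOn_deriv hderiv hanti hρ hzero, ?_⟩
  calc 0 = g 0 := by simp [hg]
    _ < g ρ₁ := hmono (left_mem_Icc.mpr hρ.1) (right_mem_Icc.mpr hρ.1) hρ₁.1

theorem stmt11 (p : ℕ) (hp : 0 < p) (Λ : ℕ → ℝ) (hΛ0 : 1 < Λ 0)
    (hΛ : ∀ k ∈ Finset.Icc 1 (p - 1), 0 ≤ Λ k)
    (ρ₁ : ℝ) (hρ₁ : ρ₁ ∈ Set.Ioo (0 : ℝ) 1)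
    (hroot : Λ 0 * (1 - Λ 0 * ρ₁) / (Λ 0 - ρ₁)
      = ∑ k ∈ Finset.Icc 1 (p - 1), ((k : ℝ) + 1) * Λ k * ρ₁ ^ k)
    (g : ℝ → ℝ)
    (hg : ∀ x, g x = (Λ 0) ^ 2 * x
      - (∑ k ∈ Finset.Icc 1 (p - 1), Λ k * x ^ (k + 1))
      + ((Λ 0) ^ 3 - Λ 0) * Real.log (1 - x / Λ 0)) :
    (∀ x ∈ Set.Icc (0 : ℝ) 1, deriv g x = 0 ↔ x = ρ₁) ∧
    StrictMonoOn g (Set.Icc 0 ρ₁) ∧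
    StrictAntiOn g (Set.Icc ρ₁ 1) ∧
    0 < g ρ₁ :=
  stmt11_general p Λ hΛ0 hΛ ρ₁ hρ₁ hroot g hg
end
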